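/- For an S-sorted TRS R over a simple signature, the system of type-preserving weak innermost dependency pairs together with the usable rules is again an S-sorted TRS over a simple signature, where each marked symbol f♯ receives the arity and type of f, and each compound symbol c introduced for rule f(l₁,…,lₙ) → C[r₁,…,r_m] receives arity (type(r₁),…,type(r_m)) and type type(f). -/

import Mathlib

inductive Term (F V : Type) : Type
  | var : V → Term F V
  | fn : F → List (Term F V) → Term F V

namespace Term
variable {F V : Type}

mutual
  def size : Term F V → ℕ
    | .var _ => 1
    | .fn _ ts => 1 + sizeList ts
  def sizeList : List (Term F V) → ℕ
    | [] => 0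
    | t :: ts => size t + sizeList ts
end

mutual
  def depth : Term F V → ℕ
    | .var _ => 0
    | .fn _ ts => 1 + depthList ts
  def depthList : List (Term F V) → ℕ
    | [] => 0
    | t :: ts => max (depth t) (depthList ts)
end

mutual
  def width : Term F V → ℕ
    | .var _ => 1
    | .fn _ [] => 1
    | .fn _ (t :: ts) => max (ts.length + 1) (max (width t) (widthList ts))
  def widthList : List (Term F V) → ℕ
    | [] => 1
    | t :: ts => max (width t) (widthList ts)
end

mutual
  def bnorm : Term F V → ℕ
    | .var _ => 1
    | .fn _ ts => 1 + max ts.length (bnormList ts)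
  def bnormList : List (Term F V) → ℕ
    | [] => 0
    | t :: ts => max (bnorm t) (bnormList ts)
end

mutual
  def subst (σ : V → Term F V) : Term F V → Term F V
    | .var x => σ x
    | .fn f ts => .fn f (substList σ ts)
  def substList (σ : V → Term F V) : List (Term F V) → List (Term F V)
    | [] => []
    | t :: ts => subst σ t :: substList σ ts
end

/-- The equivalence on terms induced by an equivalence `eqv` on function symbols:
`s ≈ t` iff `s = t`, or the roots are equivalent and the arguments are pairwise
equivalent up to a permutation. -/
inductive TermEq (eqv : F → F → Prop) : Term F V → Term F V → Prop
  | refl (t) : TermEq eqv t t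
  | fn {f g : F} {ss ts : List (Term F V)} (hfg : eqv f g)
      (π : Fin ss.length → Fin ts.length) (hbij : Function.Bijective π)
      (h : ∀ i, TermEq eqv (ss.get i) (ts.get (π i))) :
      TermEq eqv (.fn f ss) (.fn g ts)

/-- The (reflexive) subterm relation. -/
inductive Subterm : Term F V → Term F V → Prop
  | refl (t) : Subterm t t
  | arg {s t : Term F V} {f : F} {ts : List (Term F V)} :
      t ∈ ts → Subterm s t → Subterm s (.fn f ts)

end Term

namespace Term
variable {S F V : Type}

/-- Well-typed terms over an `S`-sorted signature. -/
inductive WellTyped (ar : F → List S) (typeOf : F → S) (vsort : V → S) :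
    Term F V → S → Prop
  | var (x : V) : WellTyped ar typeOf vsort (.var x) (vsort x)
  | fn {f : F} {ts : List (Term F V)} (hlen : ts.length = (ar f).length)
      (h : ∀ i : Fin ts.length,
        WellTyped ar typeOf vsort (ts.get i) ((ar f).get (Fin.cast hlen i))) :
      WellTyped ar typeOf vsort (.fn f ts) (typeOf f)

/-- Simplicity of the constructor part of a sorted signature: for every
constructor `c : (s₁,…,sₙ) → s` each `sᵢ` has rank at most that of `s`, and at
most one `sᵢ` has rank equal to that of `s`. -/
def SimpleFor (ar : F → List S) (typeOf : F → S) (rank : S → ℕ)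
    (ctor : F → Prop) : Prop :=
  ∀ f : F, ctor f → (∀ s' ∈ ar f, rank s' ≤ rank (typeOf f)) ∧
    ((ar f).countP (fun s' => decide (rank s' = rank (typeOf f)))) ≤ 1

/-- `Decomp isDef r us` expresses `r = C[u₁,…,uₘ]` where the context `C`
contains no defined symbols and every `uᵢ` has defined root. -/
inductive Decomp (isDef : F → Prop) : Term F V → List (Term F V) → Prop
  | hole {f : F} {ts : List (Term F V)} (h : isDef f) :
      Decomp isDef (.fn f ts) [.fn f ts]
  | var (x : V) : Decomp isDef (.var x) []
  | node {f : F} {ts : List (Term F V)} {uss : List (List (Term F V))}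
      (hf : ¬ isDef f) (hlen : uss.length = ts.length)
      (h : ∀ i : Fin ts.length,
        Decomp isDef (ts.get i) (uss.get (Fin.cast hlen.symm i))) :
      Decomp isDef (.fn f ts) uss.flatten

end Term

/-- The extended signature: original symbols, marked symbols `f♯`, and compound
symbols, indexed by a rule together with the list of extracted subterms. -/
abbrev ExtSym (F V : Type) : Type :=
  F ⊕ (F ⊕ ((Term F V × Term F V) × List (Term F V)))

namespace Term
variable {F V : Type}

mutual
  /-- Embedding of terms into the extended signature. -/
  def emb : Term F V → Term (ExtSym F V) V
    | .var x => .var x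
    | .fn f ts => .fn (Sum.inl f) (embList ts)
  def embList : List (Term F V) → List (Term (ExtSym F V) V)
    | [] => []
    | t :: ts => emb t :: embList ts
end

/-- Marking the root symbol: `f(t₁,…,tₙ)♯ = f♯(t₁,…,tₙ)`. -/
def markT : Term F V → Term (ExtSym F V) V
  | .var x => .var x
  | .fn f ts => .fn (Sum.inr (Sum.inl f)) (embList ts)

end Term

/-!
Marked symbols copy the signature, so `l♯` is typed like `l`. Each extracted `uᵢ` is a subterm
of the well-typed `r`, hence well typed at its root sort, and declaring these sorts as the arity
of the compound symbol types `c(u₁♯,…,uₘ♯)` at the sort of `r`, which is that of `l`.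
The context `C` above the `uᵢ` consists of constructors only; descending through a constructor
never increases the rank and keeps it for at most one argument, so along `C` the holes have rank
at most that of `r`, and at most one hole keeps it. This is exactly the simplicity of `c`.
-/

theorem List.forall₂_of_get_cast {α β : Type*} {R : α → β → Prop} {l₁ : List α} {l₂ : List β}
    (h : l₁.length = l₂.length) (hR : ∀ i : Fin l₁.length, R (l₁.get i) (l₂.get (Fin.cast h i))) :
    List.Forall₂ R l₁ l₂ :=
  List.forall₂_of_length_eq_of_get h fun i h₁ _ => hR ⟨i, h₁⟩

namespace Term

variable {S F V : Type} {ar : F → List S} {typeOf : F → S} {vsort : V → S}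

theorem wellTyped_fn_iff {f : F} {ts : List (Term F V)} {s : S} :
    WellTyped ar typeOf vsort (.fn f ts) s ↔
      s = typeOf f ∧ List.Forall₂ (WellTyped ar typeOf vsort) ts (ar f) := by
  constructor
  · rintro (_ | ⟨hlen, hargs⟩)
    exact ⟨rfl, List.forall₂_of_get_cast hlen hargs⟩
  · rintro ⟨rfl, hargs⟩
    exact .fn hargs.length_eq fun i => hargs.get i.2 _

def rootSort (typeOf : F → S) (vsort : V → S) : Term F V → S
  | .var x => vsort x
  | .fn f _ => typeOf f

theorem WellTyped.eq_rootSort {t : Term F V} {s : S} (h : WellTyped ar typeOf vsort t s) :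
    s = rootSort typeOf vsort t := by
  cases h <;> rfl

theorem WellTyped.unique {t : Term F V} {s s' : S} (h : WellTyped ar typeOf vsort t s)
    (h' : WellTyped ar typeOf vsort t s') : s = s' :=
  h.eq_rootSort.trans h'.eq_rootSort.symm

theorem WellTyped.of_subterm {t u : Term F V} (hu : Subterm u t) {s : S}
    (ht : WellTyped ar typeOf vsort t s) :
    WellTyped ar typeOf vsort u (rootSort typeOf vsort u) := by
  induction hu generalizing s with
  | refl => exact ht.eq_rootSort ▸ ht
  | arg hmem _ ih =>
    obtain ⟨i, hi, rfl⟩ := List.mem_iff_getElem.mp hmem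
    have hargs := (wellTyped_fn_iff.mp ht).2
    exact ih (hargs.get hi (hargs.length_eq ▸ hi))

theorem embList_eq_map (ts : List (Term F V)) : embList ts = ts.map emb := by
  induction ts with
  | nil => rfl
  | cons t ts ih => simp [embList, ih]

section Embedding

variable {ar' : ExtSym F V → List S} {typeOf' : ExtSym F V → S}

theorem WellTyped.emb (har : ∀ f, ar' (.inl f) = ar f) (hty : ∀ f, typeOf' (.inl f) = typeOf f)
    {t : Term F V} {s : S} (h : WellTyped ar typeOf vsort t s) :
    WellTyped ar' typeOf' vsort (Term.emb t) s := by
  induction h with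
  | var x => exact .var x
  | @fn f ts hlen _ ih =>
    rw [Term.emb, embList_eq_map, ← hty]
    refine wellTyped_fn_iff.mpr ⟨rfl, ?_⟩
    rw [har, List.forall₂_map_left_iff]
    exact List.forall₂_of_get_cast hlen ih

theorem WellTyped.markT (har : ∀ f, ar' (.inl f) = ar f) (hty : ∀ f, typeOf' (.inl f) = typeOf f)
    (harMark : ∀ f, ar' (.inr (.inl f)) = ar f) (htyMark : ∀ f, typeOf' (.inr (.inl f)) = typeOf f)
    {t : Term F V} {s : S} (h : WellTyped ar typeOf vsort t s) :
    WellTyped ar' typeOf' vsort (Term.markT t) s := by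
  rcases h with x | ⟨hlen, hargs⟩
  · exact .var x
  · rw [Term.markT, embList_eq_map, ← htyMark]
    refine wellTyped_fn_iff.mpr ⟨rfl, ?_⟩
    rw [harMark, List.forall₂_map_left_iff]
    exact (List.forall₂_of_get_cast hlen hargs).imp fun _ _ => WellTyped.emb har hty

end Embedding

/-- `SimpleFor ar typeOf rank ctor` unfolds to
`∀ f, ctor f → SimpleArity rank (ar f) (typeOf f)`. -/
def SimpleArity (rank : S → ℕ) (ss : List S) (s : S) : Prop :=
  (∀ s' ∈ ss, rank s' ≤ rank s) ∧ ss.countP (fun s' => decide (rank s' = rank s)) ≤ 1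

section Simple

variable {rank : S → ℕ}

theorem countP_rank_eq_flatten_le {bss : List (List S)} {ss : List S} {s : S}
    (h : List.Forall₂ (SimpleArity rank) bss ss) (hle : ∀ s' ∈ ss, rank s' ≤ rank s) :
    bss.flatten.countP (fun s' => decide (rank s' = rank s)) ≤
      ss.countP (fun s' => decide (rank s' = rank s)) := by
  induction h with
  | nil => simp
  | @cons bs s' bss ss hbs _ ih =>
    rw [List.flatten_cons, List.countP_append, List.countP_cons, Nat.add_comm (ss.countP _)]
    refine Nat.add_le_add ?_ (ih fun x hx => hle x (List.mem_cons_of_mem _ hx))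
    by_cases heq : rank s' = rank s
    · simpa [heq] using hbs.2
    · have hlt : rank s' < rank s := (hle s' List.mem_cons_self).lt_of_ne heq
      simp only [heq, decide_false, Bool.false_eq_true, if_false, Nat.le_zero,
        List.countP_eq_zero, decide_eq_true_eq]
      exact fun x hx => ((hbs.1 x hx).trans_lt hlt).ne

theorem SimpleArity.flatten {bss : List (List S)} {ss : List S} {s : S}
    (h : List.Forall₂ (SimpleArity rank) bss ss) (hs : SimpleArity rank ss s) :
    SimpleArity rank bss.flatten s := by
  refine ⟨fun x hx => ?_, (countP_rank_eq_flatten_le h hs.1).trans hs.2⟩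
  obtain ⟨bs, hbs, hx⟩ := List.mem_flatten.mp hx
  obtain ⟨i, hi, rfl⟩ := List.mem_iff_getElem.mp hbs
  exact ((h.get hi (h.length_eq ▸ hi)).1 x hx).trans (hs.1 _ (List.getElem_mem _))

end Simple

section Decomp

variable {isDef : F → Prop} {r : Term F V} {us : List (Term F V)}

theorem Decomp.subterm_of_mem (hd : Decomp isDef r us) {u : Term F V} (hu : u ∈ us) :
    Subterm u r := by
  induction hd generalizing u with
  | hole => rw [List.mem_singleton.mp hu]; exact .refl _
  | var => simp at hu
  | node _ hlen _ ih =>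
    obtain ⟨us', hus', hu⟩ := List.mem_flatten.mp hu
    obtain ⟨j, hj, rfl⟩ := List.mem_iff_getElem.mp hus'
    exact .arg (List.get_mem _ _) (ih ⟨j, hlen ▸ hj⟩ hu)

theorem Decomp.simpleArity {rank : S → ℕ} (hsimple : SimpleFor ar typeOf rank (¬ isDef ·))
    (hd : Decomp isDef r us) {s : S} (hr : WellTyped ar typeOf vsort r s) :
    SimpleArity rank (us.map (rootSort typeOf vsort)) s := by
  induction hd generalizing s with
  | hole => rw [hr.eq_rootSort]; simp [SimpleArity]
  | var => simp [SimpleArity]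
  | @node f _ uss hf hlen _ ih =>
    obtain ⟨rfl, hargs⟩ := wellTyped_fn_iff.mp hr
    have hblocks : List.Forall₂ (fun us s' => SimpleArity rank (us.map (rootSort typeOf vsort)) s')
        uss (ar f) :=
      List.forall₂_of_length_eq_of_get (hlen.trans hargs.length_eq) fun j hj _ =>
        ih ⟨j, hlen ▸ hj⟩ (hargs.get _ _)
    rw [List.map_flatten]
    exact SimpleArity.flatten (List.forall₂_map_left_iff.mpr hblocks) (hsimple f hf)

end Decomp

section Extension

variable (ar typeOf vsort) (isDef : F → Prop) (R : Set (Term F V × Term F V))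

open Classical in
noncomputable def extAr : ExtSym F V → List S
  | .inl f => ar f
  | .inr (.inl f) => ar f
  | .inr (.inr ((l, r), us)) =>
      -- indices that are not dependency pairs of `R` get arity `[]`, which is trivially simple
      if (l, r) ∈ R ∧ Decomp isDef r us then us.map (rootSort typeOf vsort) else []

def extSort : ExtSym F V → S
  | .inl f => typeOf f
  | .inr (.inl f) => typeOf f
  | .inr (.inr ((l, _), _)) => rootSort typeOf vsort l

variable {ar typeOf vsort isDef R}

theorem wellTyped_extAr_emb {t : Term F V} {s : S} (h : WellTyped ar typeOf vsort t s) :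
    WellTyped (extAr ar typeOf vsort isDef R) (extSort typeOf vsort) vsort (emb t) s :=
  h.emb (fun _ => rfl) (fun _ => rfl)

theorem wellTyped_extAr_markT {t : Term F V} {s : S} (h : WellTyped ar typeOf vsort t s) :
    WellTyped (extAr ar typeOf vsort isDef R) (extSort typeOf vsort) vsort (markT t) s :=
  h.markT (fun _ => rfl) (fun _ => rfl) (fun _ => rfl) (fun _ => rfl)

theorem wellTyped_extAr_compound
    (hsorted : ∀ p ∈ R, ∃ s : S,
      WellTyped ar typeOf vsort p.1 s ∧ WellTyped ar typeOf vsort p.2 s)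
    {l r : Term F V} {us : List (Term F V)} {s : S} (hR : (l, r) ∈ R) (hd : Decomp isDef r us)
    (hl : WellTyped ar typeOf vsort l s) :
    WellTyped (extAr ar typeOf vsort isDef R) (extSort typeOf vsort) vsort
      (.fn (.inr (.inr ((l, r), us))) (us.map markT)) s := by
  obtain ⟨s', hl', hr⟩ := hsorted _ hR
  rw [hl'.unique hl] at hr
  rw [hl.eq_rootSort]
  refine wellTyped_fn_iff.mpr ⟨rfl, ?_⟩
  rw [extAr, if_pos ⟨hR, hd⟩, List.forall₂_map_left_iff, List.forall₂_map_right_iff,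
    List.forall₂_same]
  exact fun u hu => wellTyped_extAr_markT (hr.of_subterm (hd.subterm_of_mem hu))

theorem simpleFor_extAr {rank : S → ℕ} {ctor : ExtSym F V → Prop}
    (hsorted : ∀ p ∈ R, ∃ s : S,
      WellTyped ar typeOf vsort p.1 s ∧ WellTyped ar typeOf vsort p.2 s)
    (hsimple : SimpleFor ar typeOf rank (¬ isDef ·))
    (hctor : ∀ f, ctor (.inl f) → ¬ isDef f) (hmarked : ∀ f, ¬ ctor (.inr (.inl f))) :
    SimpleFor (extAr ar typeOf vsort isDef R) (extSort typeOf vsort) rank ctor := by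
  rintro (f | f | ⟨⟨l, r⟩, us⟩) hf
  · exact hsimple f (hctor f hf)
  · exact (hmarked f hf).elim
  · change SimpleArity rank _ (rootSort typeOf vsort l)
    by_cases hdp : (l, r) ∈ R ∧ Decomp isDef r us
    · obtain ⟨s, hl, hr⟩ := hsorted _ hdp.1
      rw [extAr, if_pos hdp, ← hl.eq_rootSort]
      exact hdp.2.simpleArity hsimple hr
    · rw [extAr, if_neg hdp]
      simp [SimpleArity]

end Extension

end Term

open Term

/-- For an `S`-sorted TRS `R` over a simple signature, the system of
type-preserving weak innermost dependency pairs together with the usable rules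
is again an `S`-sorted TRS over a simple signature: the marked symbol `f♯`
receives the arity and type of `f`; each compound symbol `c` introduced for a
rule `f(l₁,…,lₙ) → C[r₁,…,rₘ]` receives arity `(type r₁,…,type rₘ)` and type
`type f`, making all dependency pairs and all (usable) rules well-typed, while
the constructor part of the extended signature remains simple. -/
theorem tpwidp_sorted_simple {S F V : Type}
    (ar : F → List S) (typeOf : F → S) (vsort : V → S) (rank : S → ℕ)
    (isDef : F → Prop)
    (R : Set (Term F V × Term F V))
    (hsorted : ∀ p ∈ R, ∃ s : S,
      WellTyped ar typeOf vsort p.1 s ∧ WellTyped ar typeOf vsort p.2 s)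
    (hsimple : SimpleFor ar typeOf rank (fun f => ¬ isDef f)) :
    ∃ (ar' : ExtSym F V → List S) (typeOf' : ExtSym F V → S),
      (∀ f : F, ar' (Sum.inl f) = ar f ∧ typeOf' (Sum.inl f) = typeOf f) ∧
      (∀ f : F, ar' (Sum.inr (Sum.inl f)) = ar f ∧
        typeOf' (Sum.inr (Sum.inl f)) = typeOf f) ∧
      (∀ (l r : Term F V) (us : List (Term F V)) (f : F)
          (ls : List (Term F V)) (s : S),
        (l, r) ∈ R → l = Term.fn f ls → Decomp isDef r us →
        WellTyped ar typeOf vsort l s →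
          typeOf' (Sum.inr (Sum.inr ((l, r), us))) = s ∧
          WellTyped ar' typeOf' vsort (markT l) s ∧
          WellTyped ar' typeOf' vsort
            (Term.fn (Sum.inr (Sum.inr ((l, r), us))) (us.map markT)) s) ∧
      (∀ p ∈ R, ∃ s : S,
        WellTyped ar' typeOf' vsort (emb p.1) s ∧
        WellTyped ar' typeOf' vsort (emb p.2) s) ∧
      ∃ rank' : S → ℕ,
        SimpleFor ar' typeOf' rank'
          (fun f' => match f' with
            | Sum.inl f => ¬ isDef f
            | Sum.inr (Sum.inl _) => False
            | Sum.inr (Sum.inr _) => True) := by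
  refine ⟨extAr ar typeOf vsort isDef R, extSort typeOf vsort, fun _ => ⟨rfl, rfl⟩,
    fun _ => ⟨rfl, rfl⟩, ?_, ?_, rank,
    simpleFor_extAr hsorted hsimple (fun _ h => h) (fun _ h => h)⟩
  · intro l r us _ _ s hR _ hd hl
    exact ⟨hl.eq_rootSort.symm, wellTyped_extAr_markT hl,
      wellTyped_extAr_compound hsorted hR hd hl⟩
  · intro p hp
    obtain ⟨s, hl, hr⟩ := hsorted p hp
    exact ⟨s, wellTyped_extAr_emb hl, wellTyped_extAr_emb hr⟩
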